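/- Let τ > 0 and define the clipped angle θ̄*(τ,s) = arccos( max(−1, min(1, cosh(τ/2) − e^{−s}/2) ) ) for all s ∈ ℝ. Then for every χ ∈ ℝ with −1 < cosh(τ/2) − e^{−χ}/2 < 1, the integral ∫_{−∞}^{χ} (1 − θ̄*(τ,s)/π) ds converges and equals (1/π) ∫_{0}^{π − θ*(τ,χ)} ( s·sin s / (cos s + cosh(τ/2)) ) ds, where θ*(τ,χ) = arccos(cosh(τ/2) − e^{−χ}/2). -/

import Mathlib

/-!
Write `c = cosh(τ/2)`. The slope `1 - θ̄*(τ,s)/π` vanishes for `s ≤ -log(2(c+1))`, so the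
integral over `(-∞, χ]` is an ordinary integral starting there. On the bulk, the substitution
`s = -log(2(c + cos u))` turns `c - e^{-s}/2` into `-cos u`, so the slope becomes `u/π`, while
`ds = sin u/(c + cos u) du`; the endpoints `-log(2(c+1))` and `χ` correspond to `u = 0` and
`u = π - θ*(τ,χ)`. The substitution stays valid because
`c + cos u ≥ c + cos(π - θ*) = e^{-χ}/2 > 0` on `[0, π - θ*]`, as `cos` decreases on `[0, π]`.
-/

/-- `θ*(τ,χ) = arccos(cosh(τ/2) - e^{-χ}/2)`. -/
noncomputable def thetaStar (τ χ : ℝ) : ℝ :=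
  Real.arccos (Real.cosh (τ / 2) - Real.exp (-χ) / 2)

/-- The clipped angle `θ̄*(τ,s) = arccos(max(-1, min(1, cosh(τ/2) - e^{-s}/2)))`;
`θ̄*(τ,s)/π` is the limiting density of horizontal tiles at macroscopic position `(τ,s)`. -/
noncomputable def thetaBar (τ s : ℝ) : ℝ :=
  Real.arccos (max (-1) (min 1 (Real.cosh (τ / 2) - Real.exp (-s) / 2)))

open Real MeasureTheory Set intervalIntegral

/-- `1 - θ̄*(τ,s)/π`, with `cosh(τ/2)` replaced by an arbitrary level `c`. -/
noncomputable def heightSlope (c s : ℝ) : ℝ :=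
  1 - arccos (max (-1) (min 1 (c - exp (-s) / 2))) / π

theorem continuous_heightSlope (c : ℝ) : Continuous (heightSlope c) := by
  unfold heightSlope
  fun_prop

theorem heightSlope_eq_zero {c s : ℝ} (hc : -1 < c) (hs : s ≤ -log (2 * (c + 1))) :
    heightSlope c s = 0 := by
  have hexp : 2 * (c + 1) ≤ exp (-s) := by
    rw [← exp_log (by linarith : 0 < 2 * (c + 1))]
    exact exp_le_exp.mpr (by linarith)
  have hclip : max (-1) (min 1 (c - exp (-s) / 2)) = -1 :=
    max_eq_left (min_le_of_right_le (by linarith))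
  rw [heightSlope, hclip, arccos_neg_one, div_self pi_ne_zero, sub_self]

theorem heightSlope_neg_log_two_mul_add_cos {c u : ℝ} (hu₀ : 0 ≤ u) (huπ : u ≤ π)
    (hcu : 0 < c + cos u) :
    heightSlope c (-log (2 * (c + cos u))) = u / π := by
  have hval : c - exp (-(-log (2 * (c + cos u)))) / 2 = -cos u := by
    rw [neg_neg, exp_log (by linarith)]
    ring
  rw [heightSlope, hval, min_eq_right (by linarith [neg_one_le_cos u]),
    max_eq_right (by linarith [cos_le_one u]), arccos_neg, arccos_cos hu₀ huπ]
  field_simp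
  ring

theorem hasDerivAt_neg_log_two_mul_add_cos {c u : ℝ} (hcu : 0 < c + cos u) :
    HasDerivAt (fun u => -log (2 * (c + cos u))) (sin u / (c + cos u)) u := by
  have h := ((((hasDerivAt_cos u).const_add c).const_mul 2).log (by positivity)).neg
  rwa [show -(2 * -sin u / (2 * (c + cos u))) = sin u / (c + cos u) by field_simp] at h

theorem integrableOn_Iic_heightSlope {c : ℝ} (hc : -1 < c) (χ : ℝ) :
    IntegrableOn (heightSlope c) (Iic χ) := by
  have hzero : IntegrableOn (heightSlope c) (Iic (-log (2 * (c + 1)))) :=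
    integrableOn_zero.congr_fun (fun s hs => (heightSlope_eq_zero hc hs).symm) measurableSet_Iic
  exact (hzero.union (continuous_heightSlope c).integrableOn_Icc).mono_set
    Iic_subset_Iic_union_Icc

theorem setIntegral_Iic_heightSlope {c : ℝ} (hc : -1 < c) (χ : ℝ) :
    ∫ s in Iic χ, heightSlope c s = ∫ s in -log (2 * (c + 1))..χ, heightSlope c s := by
  have hzero : ∫ s in Iic (-log (2 * (c + 1))), heightSlope c s = 0 :=
    setIntegral_eq_zero_of_forall_eq_zero fun s hs => heightSlope_eq_zero hc hs
  rw [← integral_Iic_sub_Iic (integrableOn_Iic_heightSlope hc _)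
    (integrableOn_Iic_heightSlope hc _), hzero, sub_zero]

theorem integral_Iic_heightSlope {c χ : ℝ} (h₁ : -1 < c - exp (-χ) / 2)
    (h₂ : c - exp (-χ) / 2 < 1) :
    ∫ s in Iic χ, heightSlope c s =
      (1 / π) * ∫ u in (0 : ℝ)..(π - arccos (c - exp (-χ) / 2)),
        u * sin u / (cos u + c) := by
  set b := π - arccos (c - exp (-χ) / 2)
  have hb₀ : 0 ≤ b := sub_nonneg.mpr (arccos_le_pi _)
  have hbπ : b ≤ π := sub_le_self _ (arccos_nonneg _)
  have hcos_b : cos b = -(c - exp (-χ) / 2) := by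
    rw [cos_pi_sub, cos_arccos h₁.le h₂.le]
  have hpos : ∀ u ∈ uIcc 0 b, 0 < c + cos u := by
    intro u hu
    rw [uIcc_of_le hb₀] at hu
    have := cos_le_cos_of_nonneg_of_le_pi hu.1 hbπ hu.2
    linarith [exp_pos (-χ)]
  have hend : -log (2 * (c + cos b)) = χ := by
    rw [hcos_b, show 2 * (c + -(c - exp (-χ) / 2)) = exp (-χ) by ring, log_exp, neg_neg]
  have hsubst := integral_comp_mul_deriv (f := fun u => -log (2 * (c + cos u)))
    (fun u hu => hasDerivAt_neg_log_two_mul_add_cos (hpos u hu))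
    (continuousOn_sin.div (continuousOn_const.add continuousOn_cos) fun u hu => (hpos u hu).ne')
    (continuous_heightSlope c)
  simp only [cos_zero, hend] at hsubst
  rw [setIntegral_Iic_heightSlope (by linarith [exp_pos (-χ)]), ← hsubst,
    ← intervalIntegral.integral_const_mul]
  refine integral_congr fun u hu => ?_
  obtain ⟨hu₀, hub⟩ : u ∈ Icc 0 b := uIcc_of_le hb₀ ▸ hu
  rw [Function.comp_apply, heightSlope_neg_log_two_mul_add_cos hu₀ (hub.trans hbπ) (hpos u hu),
    add_comm (cos u)]
  field_simp

theorem limit_shape_height_general (τ χ : ℝ)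
    (hbulk₁ : -1 < Real.cosh (τ / 2) - Real.exp (-χ) / 2)
    (hbulk₂ : Real.cosh (τ / 2) - Real.exp (-χ) / 2 < 1) :
    MeasureTheory.IntegrableOn (fun s : ℝ => 1 - thetaBar τ s / Real.pi)
      (Set.Iic χ) MeasureTheory.volume ∧
    ∫ s in Set.Iic χ, (1 - thetaBar τ s / Real.pi) =
      (1 / Real.pi) *
        ∫ s in (0 : ℝ)..(Real.pi - thetaStar τ χ),
          s * Real.sin s / (Real.cos s + Real.cosh (τ / 2)) :=
  ⟨integrableOn_Iic_heightSlope (by linarith [exp_pos (-χ)]) χ,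
    integral_Iic_heightSlope hbulk₁ hbulk₂⟩

/-- The height function of the limit shape: for `(τ,χ)` in the bulk,
`∫_{-∞}^{χ} (1 - θ̄*(τ,s)/π) ds` converges and equals
`(1/π) ∫_0^{π-θ*(τ,χ)} s sin s/(cos s + cosh(τ/2)) ds`. -/
theorem limit_shape_height (τ χ : ℝ) (hτ : 0 < τ)
    (hbulk₁ : -1 < Real.cosh (τ / 2) - Real.exp (-χ) / 2)
    (hbulk₂ : Real.cosh (τ / 2) - Real.exp (-χ) / 2 < 1) :
    MeasureTheory.IntegrableOn (fun s : ℝ => 1 - thetaBar τ s / Real.pi)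
      (Set.Iic χ) MeasureTheory.volume ∧
    ∫ s in Set.Iic χ, (1 - thetaBar τ s / Real.pi) =
      (1 / Real.pi) *
        ∫ s in (0 : ℝ)..(Real.pi - thetaStar τ χ),
          s * Real.sin s / (Real.cos s + Real.cosh (τ / 2)) :=
  limit_shape_height_general τ χ hbulk₁ hbulk₂
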